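/- arXiv:1406.0877 — 7 statements merged into one kernel-verified Lean document; each statement's English description precedes it below -/
import Mathlib

section
/- The point (S*, I_H*, A*) with S* = Λ/(μ R₂), I_H* = (R₂-1) μ N_H (α₁+d_A+μ)/(β₂(α₁+d_A+μ+η ρ₁)), A* = (R₂-1) ρ₁ μ N_H/(β₂(α₁+d_A+μ+η ρ₁)) is an equilibrium of the HIV/AIDS submodel: setting S = S*, I_H = I_H*, A = A* makes the right-hand sides Λ - λ_H S - μ S, λ_H S - (ρ₁+μ)I_H + α₁ A, and ρ₁ I_H - α₁ A - (μ+d_A)A all equal to zero, where λ_H = β₂(I_H + η A)/N_H and N_H = S + I_H + A. -/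
/-!
Write `D = α₁ + d_A + μ + η ρ₁` and `E = μ α₁ + (μ + ρ₁)(μ + d_A)`, so that `R₂ = Λ β₂ D / (N_H μ E)`.
At the candidate point `I_H + η A = (R₂ - 1) μ N_H / β₂`, hence the force of infection is
`λ_H = (R₂ - 1) μ` and `(λ_H + μ) S = μ R₂ S = Λ`. The AIDS equation balances because
`ρ₁ I_H` and `(α₁ + μ + d_A) A` are the same multiple of `R₂ - 1`, and the infected equation
because `(ρ₁ + μ) I_H - α₁ A = (R₂ - 1) μ N_H E / (β₂ D) = (R₂ - 1) Λ / R₂ = λ_H S`.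
-/

section EndemicPoint

variable {μ β₂ η ρ₁ α₁ dA NH : ℝ}

theorem aids_balance_at_endemic (r : ℝ) :
    ρ₁ * (r * (μ * NH * (α₁ + dA + μ)) / (β₂ * (α₁ + dA + μ + η * ρ₁)))
      - α₁ * (r * (ρ₁ * μ * NH) / (β₂ * (α₁ + dA + μ + η * ρ₁)))
      - (μ + dA) * (r * (ρ₁ * μ * NH) / (β₂ * (α₁ + dA + μ + η * ρ₁))) = 0 := by
  ring

theorem infectious_load_at_endemic (r : ℝ) (hD : α₁ + dA + μ + η * ρ₁ ≠ 0) :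
    r * (μ * NH * (α₁ + dA + μ)) / (β₂ * (α₁ + dA + μ + η * ρ₁))
      + η * (r * (ρ₁ * μ * NH) / (β₂ * (α₁ + dA + μ + η * ρ₁))) = r * μ * NH / β₂ := by
  rw [mul_div_assoc', ← add_div, mul_comm β₂, ← div_div]
  congr 1
  field_simp

theorem infected_outflow_at_endemic (r : ℝ) :
    (ρ₁ + μ) * (r * (μ * NH * (α₁ + dA + μ)) / (β₂ * (α₁ + dA + μ + η * ρ₁)))
      - α₁ * (r * (ρ₁ * μ * NH) / (β₂ * (α₁ + dA + μ + η * ρ₁)))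
      = r * (μ * NH * (μ * α₁ + (μ + ρ₁) * (μ + dA))) / (β₂ * (α₁ + dA + μ + η * ρ₁)) := by
  ring

end EndemicPoint

theorem div_reproductionNumber {Λ μ β₂ η ρ₁ α₁ dA NH : ℝ} (hΛ : Λ ≠ 0) (hμ : μ ≠ 0)
    (hβ₂ : β₂ ≠ 0) (hNH : NH ≠ 0) (hD : α₁ + dA + μ + η * ρ₁ ≠ 0)
    (hE : μ * α₁ + (μ + ρ₁) * (μ + dA) ≠ 0) :
    Λ / ((Λ / (NH * μ)) * β₂ * (μ + α₁ + dA + η * ρ₁) / (μ * α₁ + (μ + ρ₁) * (μ + dA)))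
      = μ * NH * (μ * α₁ + (μ + ρ₁) * (μ + dA)) / (β₂ * (α₁ + dA + μ + η * ρ₁)) := by
  have hD' : μ + α₁ + dA + η * ρ₁ ≠ 0 := by rwa [show μ + α₁ + dA = α₁ + dA + μ by ring]
  field_simp
  ring

theorem TB_free_equilibrium
    (Λ μ β₂ η ρ₁ α₁ dA NH : ℝ)
    (hΛ : 0 < Λ) (hμ : 0 < μ) (hβ₂ : 0 < β₂) (hη : 1 ≤ η)
    (hρ₁ : 0 < ρ₁) (hα₁ : 0 < α₁) (hdA : 0 < dA) (hNH : 0 < NH)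
    (R₂ : ℝ)
    (hR₂def : R₂ = (Λ / (NH * μ)) * β₂ * (μ + α₁ + dA + η * ρ₁) /
      (μ * α₁ + (μ + ρ₁) * (μ + dA)))
    (S IH A : ℝ)
    (hS : S = Λ / (μ * R₂))
    (hIH : IH = (R₂ - 1) * (μ * NH * (α₁ + dA + μ)) /
      (β₂ * (α₁ + dA + μ + η * ρ₁)))
    (hA : A = (R₂ - 1) * (ρ₁ * μ * NH) /
      (β₂ * (α₁ + dA + μ + η * ρ₁)))
    (lamH : ℝ) (hlam : lamH = β₂ * (IH + η * A) / NH) :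
    Λ - lamH * S - μ * S = 0 ∧
    lamH * S - (ρ₁ + μ) * IH + α₁ * A = 0 ∧
    ρ₁ * IH - α₁ * A - (μ + dA) * A = 0 := by
  have hD : 0 < α₁ + dA + μ + η * ρ₁ := by nlinarith
  have hE : 0 < μ * α₁ + (μ + ρ₁) * (μ + dA) := by positivity
  have hR₂ : 0 < R₂ := by rw [hR₂def]; positivity
  have hΛR₂ := div_reproductionNumber hΛ.ne' hμ.ne' hβ₂.ne' hNH.ne' hD.ne' hE.ne'
  rw [← hR₂def] at hΛR₂
  have hlamH : lamH = (R₂ - 1) * μ := by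
    rw [hlam, hIH, hA, infectious_load_at_endemic _ hD.ne']
    field_simp
  have hSusceptible : (lamH + μ) * S = Λ := by
    rw [hlamH, hS]
    field_simp
    ring
  have hInfection : lamH * S = (R₂ - 1) * (Λ / R₂) := by
    rw [hlamH, hS]
    field_simp
  refine ⟨by linear_combination -hSusceptible, ?_, ?_⟩
  · rw [hInfection, hΛR₂, hIH, hA]
    linear_combination -infected_outflow_at_endemic (R₂ - 1)
  · rw [hIH, hA]
    exact aids_balance_at_endemic _
end

section
/- With β* = (μ α + (μ + ρ)(μ + d))/(α + d + μ + η ρ) and μ, ρ, α, d > 0, η ≥ 1, the three eigenvalues of the matrix J = ![![-μ, -β*, -β* η], ![0, β* - ρ - μ, β* η + α], ![0, ρ, -α - d - μ]] are 0, -μ, and λ₃ = (β* - ρ - μ) + (-α - d - μ), and λ₃ < 0. -/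
/-!
At `β*` the lower-right block `M` of `J` is singular (this is `R₂ = 1`), and `J` is block upper
triangular, so its characteristic polynomial is `(-μ - x) · x · (x - trace M)`. For the sign of
`trace M = β* - ρ - α - d - 2μ` it suffices that `β* < μ + d`: the numerator of `β*` falls short of
`(μ + d)(α + μ + ρ)` by `dα`, while its denominator exceeds `α + μ + ρ`.
-/

theorem det_blockTriangular_fin_three_sub_smul_one {R : Type*} [CommRing R] (a b c p q r s x : R) :
    Matrix.det (!![a, b, c; 0, p, q; 0, r, s] - x • (1 : Matrix (Fin 3) (Fin 3) R))
      = (a - x) * (x ^ 2 - (p + s) * x + (p * s - q * r)) := by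
  simp [Matrix.det_fin_three]
  ring

section Bifurcation

variable {μ ρ α d η β : ℝ}

theorem bifurcation_denom_pos (hμ : 0 < μ) (hρ : 0 < ρ) (hα : 0 < α) (hd : 0 < d) (hη : 1 ≤ η) :
    0 < α + d + μ + η * ρ := by
  nlinarith

theorem det_infectedBlock_eq_zero_at_bifurcation (hD : α + d + μ + η * ρ ≠ 0)
    (hβ : β = (μ * α + (μ + ρ) * (μ + d)) / (α + d + μ + η * ρ)) :
    (β - ρ - μ) * (-α - d - μ) - (β * η + α) * ρ = 0 := by
  have hβD : β * (α + d + μ + η * ρ) = μ * α + (μ + ρ) * (μ + d) := by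
    rw [hβ]
    exact div_mul_cancel₀ _ hD
  linear_combination -hβD

theorem bifurcation_lt_add (hμ : 0 < μ) (hρ : 0 < ρ) (hα : 0 < α) (hd : 0 < d) (hη : 1 ≤ η)
    (hβ : β = (μ * α + (μ + ρ) * (μ + d)) / (α + d + μ + η * ρ)) :
    β < μ + d := by
  rw [hβ, div_lt_iff₀ (bifurcation_denom_pos hμ hρ hα hd hη)]
  calc μ * α + (μ + ρ) * (μ + d)
      < (μ + d) * (α + μ + ρ) := by nlinarith [mul_pos hd hα]
    _ ≤ (μ + d) * (α + d + μ + η * ρ) := by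
      have hρη : ρ ≤ η * ρ := le_mul_of_one_le_left hρ.le hη
      exact mul_le_mul_of_nonneg_left (by linarith) (by positivity)

end Bifurcation

theorem jacobian_eigenvalues_at_bifurcation
    (μ ρ α d η : ℝ)
    (hμ : 0 < μ) (hρ : 0 < ρ) (hα : 0 < α) (hd : 0 < d) (hη : 1 ≤ η)
    (βs : ℝ) (hβ : βs = (μ * α + (μ + ρ) * (μ + d)) / (α + d + μ + η * ρ))
    (lam₃ : ℝ) (hlam : lam₃ = (βs - ρ - μ) + (-α - d - μ))
    (J : Matrix (Fin 3) (Fin 3) ℝ)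
    (hJ : J = ![![-μ, -βs, -βs * η],
                ![0, βs - ρ - μ, βs * η + α],
                ![0, ρ, -α - d - μ]]) :
    (∀ x : ℝ, Matrix.det (J - x • (1 : Matrix (Fin 3) (Fin 3) ℝ))
        = -(x - 0) * (x - (-μ)) * (x - lam₃)) ∧ lam₃ < 0 := by
  have hdetM := det_infectedBlock_eq_zero_at_bifurcation
    (bifurcation_denom_pos hμ hρ hα hd hη).ne' hβ
  have hβlt := bifurcation_lt_add hμ hρ hα hd hη hβ
  refine ⟨fun x => ?_, by linarith⟩
  subst hJ
  -- `![![…]]` agrees with `!![…] = Matrix.of ![![…]]` only up to defeq, so `rw` cannot be used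
  refine (det_blockTriangular_fin_three_sub_smul_one _ _ _ _ _ _ _ x).trans ?_
  rw [hdetM, hlam]
  ring
end

section
/- The vector w = (w₁, w₂, w₃) with w₁ = -((μ α₁ + (μ + ρ₁)(μ + d_A)) w₃)/(ρ₁ μ), w₂ = ((α₁ + d_A + μ) w₃)/ρ₁, w₃ > 0 is a right eigenvector associated with eigenvalue 0 of the matrix J = ![![-μ, -β*, -β* η], ![0, β* - ρ₁ - μ, β* η + α₁], ![0, ρ₁, -α₁ - d_A - μ]], where β* = (μ α₁ + (μ + ρ₁)(μ + d_A))/(α₁ + d_A + μ + η ρ₁) and all parameters μ, ρ₁, α₁, d_A are positive, η ≥ 1. That is, J.mulVec w = 0. -/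
/-! The defining relation `β * (α₁ + dA + μ + η ρ₁) = μ α₁ + (μ + ρ₁)(μ + dA)` of the threshold
`β*` is exactly what makes the first two rows of `J` annihilate `w`. -/

theorem jacobian_mulVec_eigenvector_eq_zero_of_mul_eq (μ ρ₁ α₁ dA η β w₃ : ℝ) (hμ : μ ≠ 0)
    (hρ₁ : ρ₁ ≠ 0) (hβ : β * (α₁ + dA + μ + η * ρ₁) = μ * α₁ + (μ + ρ₁) * (μ + dA)) :
    Matrix.mulVec ![![-μ, -β, -β * η],
                    ![0, β - ρ₁ - μ, β * η + α₁],
                    ![0, ρ₁, -α₁ - dA - μ]]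
      ![-((μ * α₁ + (μ + ρ₁) * (μ + dA)) * w₃) / (ρ₁ * μ), ((α₁ + dA + μ) * w₃) / ρ₁, w₃] = 0 := by
  ext i
  fin_cases i <;>
    simp only [Matrix.mulVec, dotProduct, Fin.sum_univ_three, Fin.reduceFinMk, Matrix.cons_val_zero,
      Matrix.cons_val_one, Matrix.cons_val_two, Matrix.tail_cons, Matrix.head_cons, Pi.zero_apply] <;>
    field_simp
  · linear_combination (-w₃) * hβ
  · linear_combination μ * w₃ * hβ
  · ring

theorem right_eigenvector_zero_eigenvalue_general
    (μ ρ₁ α₁ dA η : ℝ)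
    (hμ : 0 < μ) (hρ₁ : 0 < ρ₁) (hα₁ : 0 < α₁) (hdA : 0 < dA) (hη : 1 ≤ η)
    (βs : ℝ) (hβs : βs = (μ * α₁ + (μ + ρ₁) * (μ + dA)) / (α₁ + dA + μ + η * ρ₁))
    (w₃ : ℝ)
    (w : Fin 3 → ℝ)
    (hw : w = ![-((μ * α₁ + (μ + ρ₁) * (μ + dA)) * w₃) / (ρ₁ * μ),
                ((α₁ + dA + μ) * w₃) / ρ₁, w₃]) :
    Matrix.mulVec ![![-μ, -βs, -βs * η],
                    ![0, βs - ρ₁ - μ, βs * η + α₁],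
                    ![0, ρ₁, -α₁ - dA - μ]] w = 0 := by
  have hη₀ : 0 < η := by linarith
  have hD : α₁ + dA + μ + η * ρ₁ ≠ 0 := by positivity
  subst hw
  refine jacobian_mulVec_eigenvector_eq_zero_of_mul_eq μ ρ₁ α₁ dA η βs w₃ hμ.ne' hρ₁.ne' ?_
  rw [hβs, div_mul_cancel₀ _ hD]

theorem right_eigenvector_zero_eigenvalue
    (μ ρ₁ α₁ dA η : ℝ)
    (hμ : 0 < μ) (hρ₁ : 0 < ρ₁) (hα₁ : 0 < α₁) (hdA : 0 < dA) (hη : 1 ≤ η)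
    (βs : ℝ) (hβs : βs = (μ * α₁ + (μ + ρ₁) * (μ + dA)) / (α₁ + dA + μ + η * ρ₁))
    (w₃ : ℝ) (hw₃ : 0 < w₃)
    (w : Fin 3 → ℝ)
    (hw : w = ![-((μ * α₁ + (μ + ρ₁) * (μ + dA)) * w₃) / (ρ₁ * μ),
                ((α₁ + dA + μ) * w₃) / ρ₁, w₃]) :
    Matrix.mulVec ![![-μ, -βs, -βs * η],
                    ![0, βs - ρ₁ - μ, βs * η + α₁],
                    ![0, ρ₁, -α₁ - dA - μ]] w = 0 :=
  right_eigenvector_zero_eigenvalue_general μ ρ₁ α₁ dA η hμ hρ₁ hα₁ hdA hη βs hβs w₃ w hw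
end

section
/- The vector v = (0, v₂, v₃) with v₂ = v₃ (α₁ + d_A + μ + η ρ₁)/(α₁ + η ρ₁ + μ η), v₃ > 0, is a left eigenvector associated with eigenvalue 0 of J = ![![-μ, -β*, -β* η], ![0, β* - ρ₁ - μ, β* η + α₁], ![0, ρ₁, -α₁ - d_A - μ]], where β* = (μ α₁ + (μ + ρ₁)(μ + d_A))/(α₁ + d_A + μ + η ρ₁) and μ, ρ₁, α₁, d_A > 0, η ≥ 1. That is, Jᵀ.mulVec v = 0 (equivalently v ⬝ J = 0). -/
/-!
Clearing the denominator of `v₂`, the claim is that `(0, D, E)` with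
`D = α₁ + d_A + μ + η ρ₁` and `E = α₁ + η ρ₁ + μ η` is a left null vector of `J`. Since `β*`
enters only through `β* D = μ α₁ + (μ + ρ₁)(μ + d_A)`, both nontrivial entries of `(0, D, E) J`
are linear in that identity, hence hold over any commutative ring; `v` is then `v₃ / E` times
this vector.
-/

open Matrix

/-- The Jacobian of the HIV/AIDS submodel at its disease-free equilibrium, at transmission rate `β`. -/
def hivJacobian {R : Type*} [CommRing R] (μ ρ₁ α₁ dA η β : R) : Matrix (Fin 3) (Fin 3) R :=
  ![![-μ, -β, -β * η],
    ![0, β - ρ₁ - μ, β * η + α₁],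
    ![0, ρ₁, -α₁ - dA - μ]]

theorem vecMul_hivJacobian_eq_zero {R : Type*} [CommRing R] (μ ρ₁ α₁ dA η β : R)
    (hβ : β * (α₁ + dA + μ + η * ρ₁) = μ * α₁ + (μ + ρ₁) * (μ + dA)) :
    ![0, α₁ + dA + μ + η * ρ₁, α₁ + η * ρ₁ + μ * η] ᵥ* hivJacobian μ ρ₁ α₁ dA η β = 0 := by
  ext i
  fin_cases i <;>
    simp only [hivJacobian, vecMul, dotProduct, Fin.sum_univ_three, Fin.zero_eta, Fin.mk_one,
      Fin.reduceFinMk, cons_val_zero, cons_val_one, cons_val_two, head_cons, tail_cons,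
      Pi.zero_apply]
  · ring
  · linear_combination hβ
  · linear_combination η * hβ

theorem left_eigenvector_zero_eigenvalue_general
    (μ ρ₁ α₁ dA η : ℝ)
    (hμ : 0 < μ) (hρ₁ : 0 < ρ₁) (hα₁ : 0 < α₁) (hdA : 0 < dA) (hη : 1 ≤ η)
    (βs : ℝ) (hβs : βs = (μ * α₁ + (μ + ρ₁) * (μ + dA)) / (α₁ + dA + μ + η * ρ₁))
    (v₃ : ℝ)
    (v : Fin 3 → ℝ)
    (hv : v = ![0, v₃ * (α₁ + dA + μ + η * ρ₁) / (α₁ + η * ρ₁ + μ * η), v₃]) :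
    Matrix.mulVec (Matrix.transpose ![![-μ, -βs, -βs * η],
                    ![0, βs - ρ₁ - μ, βs * η + α₁],
                    ![0, ρ₁, -α₁ - dA - μ]]) v = 0 := by
  have hη₀ : 0 < η := one_pos.trans_le hη
  have hD : α₁ + dA + μ + η * ρ₁ ≠ 0 := by positivity
  have hE : α₁ + η * ρ₁ + μ * η ≠ 0 := by positivity
  have hβ : βs * (α₁ + dA + μ + η * ρ₁) = μ * α₁ + (μ + ρ₁) * (μ + dA) := by
    rw [hβs, div_mul_cancel₀ _ hD]
  have hv' : v = (v₃ / (α₁ + η * ρ₁ + μ * η)) •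
      ![0, α₁ + dA + μ + η * ρ₁, α₁ + η * ρ₁ + μ * η] := by
    rw [hv]
    simp only [smul_cons, smul_eq_mul, smul_empty, mul_zero, div_mul_cancel₀ _ hE,
      div_mul_eq_mul_div]
  change (hivJacobian μ ρ₁ α₁ dA η βs)ᵀ *ᵥ v = 0
  rw [mulVec_transpose, hv', smul_vecMul, vecMul_hivJacobian_eq_zero μ ρ₁ α₁ dA η βs hβ, smul_zero]

theorem left_eigenvector_zero_eigenvalue
    (μ ρ₁ α₁ dA η : ℝ)
    (hμ : 0 < μ) (hρ₁ : 0 < ρ₁) (hα₁ : 0 < α₁) (hdA : 0 < dA) (hη : 1 ≤ η)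
    (βs : ℝ) (hβs : βs = (μ * α₁ + (μ + ρ₁) * (μ + dA)) / (α₁ + dA + μ + η * ρ₁))
    (v₃ : ℝ) (hv₃ : 0 < v₃)
    (v : Fin 3 → ℝ)
    (hv : v = ![0, v₃ * (α₁ + dA + μ + η * ρ₁) / (α₁ + η * ρ₁ + μ * η), v₃]) :
    Matrix.mulVec (Matrix.transpose ![![-μ, -βs, -βs * η],
                    ![0, βs - ρ₁ - μ, βs * η + α₁],
                    ![0, ρ₁, -α₁ - dA - μ]]) v = 0 :=
  left_eigenvector_zero_eigenvalue_general μ ρ₁ α₁ dA η hμ hρ₁ hα₁ hdA hη βs hβs v₃ v hv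
end

section
/- Consider the 2×2 matrix M = ![![-(k₁ + τ₁ + μ), β], ![k₁, -(τ₂ + μ + d_T)]] with all of k₁, τ₁, τ₂, μ, d_T, β strictly positive, and define R₁ = (β/(d_T + μ + τ₂)) * (k₁/(k₁ + τ₁ + μ)). Then both eigenvalues of M have negative real part if and only if R₁ < 1. -/
/-!
Over `ℂ` the characteristic polynomial of a real `2 × 2` matrix has roots `z, w` with
`z + w = trace` and `z * w = det` real. Such a pair is either real or complex conjugate,
and in both cases `z` and `w` lie in the open left half-plane exactly when `z + w < 0` and
`z * w > 0` (Routh–Hurwitz in degree two). For the TB block the trace is negative, and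
`det > 0` is `R₁ < 1` after clearing denominators.
-/

open Polynomial

theorem Complex.re_neg_and_re_neg_iff {z w : ℂ} (hsum : (z + w).im = 0) (hprod : (z * w).im = 0) :
    z.re < 0 ∧ w.re < 0 ↔ (z + w).re < 0 ∧ 0 < (z * w).re := by
  simp only [Complex.add_re, Complex.add_im, Complex.mul_re, Complex.mul_im] at hsum hprod ⊢
  have hw : w.im = -z.im := by linarith
  rw [hw] at hprod ⊢
  -- Either `z` and `w` are real (`z.im = 0`) or they are complex conjugate (`z.re = w.re`).
  have hcases : z.im = 0 ∨ z.re = w.re := by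
    rcases mul_eq_zero.mp (show z.im * (w.re - z.re) = 0 by linarith) with h | h
    · exact .inl h
    · exact .inr (by linarith)
  constructor
  · rintro ⟨hzre, hwre⟩
    exact ⟨by linarith, by nlinarith [sq_nonneg z.im]⟩
  · rintro ⟨hs, hp⟩
    rcases hcases with h | h
    · rw [h] at hp
      constructor <;> nlinarith
    · constructor <;> linarith

theorem Matrix.re_neg_of_isRoot_charpoly_iff_fin_two (A : Matrix (Fin 2) (Fin 2) ℝ) :
    (∀ z : ℂ, (A.map (fun x => (x : ℂ))).charpoly.IsRoot z → z.re < 0) ↔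
      A.trace < 0 ∧ 0 < A.det := by
  set B : Matrix (Fin 2) (Fin 2) ℂ := A.map (fun x => (x : ℂ))
  obtain ⟨z, w, hroots⟩ : ∃ z w, B.charpoly.roots = {z, w} := by
    apply Multiset.card_eq_two.mp
    rw [IsAlgClosed.card_roots_eq_natDegree, charpoly_natDegree_eq_dim, Fintype.card_fin]
  have htrace : (A.trace : ℂ) = z + w := by
    rw [← Multiset.sum_pair, ← hroots, ← trace_eq_sum_roots_charpoly]
    simp [B, trace_fin_two]
  have hdet : (A.det : ℂ) = z * w := by
    rw [← Multiset.prod_pair, ← hroots, ← det_eq_prod_roots_charpoly]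
    exact Complex.ofRealHom.map_det A
  have hisRoot (x : ℂ) : B.charpoly.IsRoot x ↔ x = z ∨ x = w := by
    rw [← mem_roots (charpoly_monic B).ne_zero, hroots, Multiset.insert_eq_cons, Multiset.mem_cons,
      Multiset.mem_singleton]
  simp only [hisRoot, forall_eq_or_imp, forall_eq]
  rw [Complex.re_neg_and_re_neg_iff (by rw [← htrace, Complex.ofReal_im])
    (by rw [← hdet, Complex.ofReal_im]), ← htrace, ← hdet, Complex.ofReal_re, Complex.ofReal_re]

theorem TB_block_stable_iff_R1_lt_one_general
    (k₁ τ₁ τ₂ μ dT β : ℝ)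
    (hk₁ : 0 < k₁) (hτ₁ : 0 < τ₁) (hτ₂ : 0 < τ₂) (hμ : 0 < μ)
    (hdT : 0 < dT)
    (R₁ : ℝ) (hR₁ : R₁ = (β / (dT + μ + τ₂)) * (k₁ / (k₁ + τ₁ + μ)))
    (M : Matrix (Fin 2) (Fin 2) ℝ)
    (hM : M = ![![-(k₁ + τ₁ + μ), β], ![k₁, -(τ₂ + μ + dT)]]) :
    (∀ z : ℂ,
      (Matrix.charpoly (M.map (fun x => (x : ℂ)))).IsRoot z → z.re < 0) ↔
    R₁ < 1 := by
  have htrace : M.trace < 0 := by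
    rw [Matrix.trace_fin_two, hM]
    simp only [Matrix.cons_val_zero, Matrix.cons_val_one]
    linarith
  have hR₁_iff : R₁ < 1 ↔ 0 < M.det := by
    rw [hR₁, Matrix.det_fin_two, hM]
    simp only [Matrix.cons_val_zero, Matrix.cons_val_one]
    rw [div_mul_div_comm, div_lt_one (by positivity)]
    constructor <;> intro h <;> linarith
  rw [M.re_neg_of_isRoot_charpoly_iff_fin_two, hR₁_iff]
  exact and_iff_right htrace

theorem TB_block_stable_iff_R1_lt_one
    (k₁ τ₁ τ₂ μ dT β : ℝ)
    (hk₁ : 0 < k₁) (hτ₁ : 0 < τ₁) (hτ₂ : 0 < τ₂) (hμ : 0 < μ)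
    (hdT : 0 < dT) (hβ : 0 < β)
    (R₁ : ℝ) (hR₁ : R₁ = (β / (dT + μ + τ₂)) * (k₁ / (k₁ + τ₁ + μ)))
    (M : Matrix (Fin 2) (Fin 2) ℝ)
    (hM : M = ![![-(k₁ + τ₁ + μ), β], ![k₁, -(τ₂ + μ + dT)]]) :
    (∀ z : ℂ,
      (Matrix.charpoly (M.map (fun x => (x : ℂ)))).IsRoot z → z.re < 0) ↔
    R₁ < 1 :=
  TB_block_stable_iff_R1_lt_one_general k₁ τ₁ τ₂ μ dT β hk₁ hτ₁ hτ₂ hμ hdT R₁ hR₁ M hM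
end

section
/- Consider the 2×2 matrix M = ![![β - ρ - μ, β η + α], ![ρ, -(α + d + μ)]] with α, d, μ, ρ, β > 0 and η ≥ 1, and define R₂ = β (μ + α + d + η ρ)/(μ α + (μ + ρ)(μ + d)). Then det M > 0 if and only if R₂ < 1, and if R₂ < 1 then both eigenvalues of M have negative real part. -/
/-!
A real 2×2 matrix with negative trace and positive determinant is Hurwitz stable: an eigenvalue
`z = x + iy` solves `z² - tz + δ = 0`, whose imaginary part forces `y = 0` or `x = t/2 < 0`, and a
real root cannot be nonnegative since then `x² - tx + δ > 0`. For the HIV block,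
`det M = μα + (μ + ρ)(μ + d) - β(μ + α + d + ηρ)`, which is positive exactly when `R₂ < 1`, and
that bound on `β` is small enough to make the trace negative.
-/

theorem Complex.re_neg_of_sq_sub_mul_add_eq_zero {t δ : ℝ} (ht : t < 0) (hδ : 0 < δ) {z : ℂ}
    (hz : z ^ 2 - t * z + δ = 0) : z.re < 0 := by
  have hre : z.re ^ 2 - z.im ^ 2 - t * z.re + δ = 0 := by
    simpa [sq] using congrArg Complex.re hz
  have him : z.im * (2 * z.re - t) = 0 := by
    have := congrArg Complex.im hz
    simp only [sq, Complex.sub_im, Complex.add_im, Complex.mul_im, Complex.ofReal_re,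
      Complex.ofReal_im, Complex.zero_im] at this
    linarith
  rcases mul_eq_zero.mp him with hreal | hcentre
  · by_contra! hnonneg
    rw [hreal] at hre
    nlinarith
  · linarith

theorem Matrix.re_neg_of_isRoot_charpoly_fin_two {A : Matrix (Fin 2) (Fin 2) ℝ}
    (htr : A.trace < 0) (hdet : 0 < A.det) {z : ℂ}
    (hz : (A.map (fun x => (x : ℂ))).charpoly.IsRoot z) : z.re < 0 := by
  refine Complex.re_neg_of_sq_sub_mul_add_eq_zero htr hdet ?_
  rw [Matrix.charpoly_fin_two] at hz
  simpa [Matrix.trace_fin_two, Matrix.det_fin_two] using hz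

theorem hiv_beta_lt_total_outflow {α d μ ρ β η : ℝ}
    (hα : 0 < α) (hd : 0 < d) (hμ : 0 < μ) (hρ : 0 < ρ) (hη : 1 ≤ η)
    (h : β * (μ + α + d + η * ρ) < μ * α + (μ + ρ) * (μ + d)) :
    β < ρ + μ + (α + d + μ) := by
  have hηρ : 0 ≤ η * ρ := by positivity
  have hp : 0 < μ + α + d + η * ρ := by positivity
  have hD : μ * α + (μ + ρ) * (μ + d) ≤ (ρ + μ + (α + d + μ)) * (μ + α + d + η * ρ) := by
    nlinarith [mul_pos hρ hμ, mul_pos hρ hα, mul_pos hμ hd, mul_pos hα hd,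
      mul_nonneg (by positivity : (0 : ℝ) ≤ ρ + μ + (α + d + μ)) hηρ]
  exact lt_of_mul_lt_mul_right (h.trans_le hD) hp.le

theorem HIV_block_stable_general
    (α d μ ρ β η : ℝ)
    (hα : 0 < α) (hd : 0 < d) (hμ : 0 < μ) (hρ : 0 < ρ)
    (hη : 1 ≤ η)
    (R₂ : ℝ)
    (hR₂ : R₂ = β * (μ + α + d + η * ρ) / (μ * α + (μ + ρ) * (μ + d)))
    (M : Matrix (Fin 2) (Fin 2) ℝ)
    (hM : M = ![![β - ρ - μ, β * η + α], ![ρ, -(α + d + μ)]]) :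
    (0 < Matrix.det M ↔ R₂ < 1) ∧
    (R₂ < 1 → ∀ z : ℂ,
      (Matrix.charpoly (M.map (fun x => (x : ℂ)))).IsRoot z → z.re < 0) := by
  have hD : 0 < μ * α + (μ + ρ) * (μ + d) := by positivity
  have hdet : M.det = μ * α + (μ + ρ) * (μ + d) - β * (μ + α + d + η * ρ) := by
    rw [hM]
    exact (Matrix.det_fin_two_of _ _ _ _).trans (by ring)
  have htr : M.trace = β - (ρ + μ + (α + d + μ)) := by
    rw [hM]
    exact (Matrix.trace_fin_two_of _ _ _ _).trans (by ring)
  have hiff : 0 < M.det ↔ R₂ < 1 := by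
    rw [hdet, hR₂, div_lt_one hD, sub_pos]
  refine ⟨hiff, fun hR z => Matrix.re_neg_of_isRoot_charpoly_fin_two ?_ (hiff.mpr hR)⟩
  rw [htr, sub_neg]
  exact hiv_beta_lt_total_outflow hα hd hμ hρ hη (by rwa [hR₂, div_lt_one hD] at hR)

theorem HIV_block_stable
    (α d μ ρ β η : ℝ)
    (hα : 0 < α) (hd : 0 < d) (hμ : 0 < μ) (hρ : 0 < ρ) (hβ : 0 < β)
    (hη : 1 ≤ η)
    (R₂ : ℝ)
    (hR₂ : R₂ = β * (μ + α + d + η * ρ) / (μ * α + (μ + ρ) * (μ + d)))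
    (M : Matrix (Fin 2) (Fin 2) ℝ)
    (hM : M = ![![β - ρ - μ, β * η + α], ![ρ, -(α + d + μ)]]) :
    (0 < Matrix.det M ↔ R₂ < 1) ∧
    (R₂ < 1 → ∀ z : ℂ,
      (Matrix.charpoly (M.map (fun x => (x : ℂ)))).IsRoot z → z.re < 0) :=
  HIV_block_stable_general α d μ ρ β η hα hd hμ hρ hη R₂ hR₂ M hM
end

section
/- Let all parameters be strictly positive, η ≥ 1, δ ≥ 1, and let (S, L_T, I_T, R_T, I_H, A, L_TH, I_TH, R_TH, A_T) be a point of the nonnegative orthant of ℝ¹⁰ with I_T > 0 and λ_H = β₂(I_H + I_TH + L_TH + R_TH + η(A + A_T))/N > 0. Then the vector Ĝ(X, Z) from the paper, whose second component is -δ λ_H I_T, has a strictly negative component; in particular the componentwise inequality Ĝ(X, Z) ≥ 0 fails. -/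
theorem H2_fails_general
    (Λ μ δ ψ βp₁ βp₂ : ℝ)
    (hδ : 1 ≤ δ)
    (S IT RT IH RTH : ℝ)
    (hIT : 0 < IT)
    (lamT lamH : ℝ)
    (hlamHpos : 0 < lamH)
    (G : Fin 8 → ℝ)
    (hG : G = ![lamT * (Λ / μ - S - βp₁ * RT),
                -(δ * lamH * IT),
                lamH * (Λ / μ - S - RT - ψ * IH),
                0,
                -(βp₂ * lamT * RTH),
                -(δ * lamH * IT + ψ * lamT * IH),
                βp₂ * lamT * RTH,
                0]) :
    (∃ i : Fin 8, G i < 0) ∧ ¬ (∀ i : Fin 8, 0 ≤ G i) := by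
  have hG₁ : G 1 < 0 := by
    subst hG
    exact neg_neg_of_pos (mul_pos (mul_pos (zero_lt_one.trans_le hδ) hlamHpos) hIT)
  exact ⟨⟨1, hG₁⟩, fun hnonneg => hG₁.not_ge (hnonneg 1)⟩

theorem H2_fails
    (Λ μ β₁ β₂ η δ ψ βp₁ βp₂ N : ℝ)
    (hΛ : 0 < Λ) (hμ : 0 < μ) (hβ₁ : 0 < β₁) (hβ₂ : 0 < β₂)
    (hη : 1 ≤ η) (hδ : 1 ≤ δ) (hψ : 1 ≤ ψ)
    (hβp₁ : 0 < βp₁) (hβp₂ : 0 < βp₂) (hN : 0 < N)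
    (S LT IT RT IH A LTH ITH RTH AT : ℝ)
    (hnn : 0 ≤ S ∧ 0 ≤ LT ∧ 0 ≤ IT ∧ 0 ≤ RT ∧ 0 ≤ IH ∧ 0 ≤ A ∧
      0 ≤ LTH ∧ 0 ≤ ITH ∧ 0 ≤ RTH ∧ 0 ≤ AT)
    (hIT : 0 < IT)
    (lamT lamH : ℝ)
    (hlamT : lamT = β₁ / N * (IT + ITH + AT))
    (hlamH : lamH = β₂ / N * (IH + ITH + LTH + RTH + η * (A + AT)))
    (hlamHpos : 0 < lamH)
    (G : Fin 8 → ℝ)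
    (hG : G = ![lamT * (Λ / μ - S - βp₁ * RT),
                -(δ * lamH * IT),
                lamH * (Λ / μ - S - RT - ψ * IH),
                0,
                -(βp₂ * lamT * RTH),
                -(δ * lamH * IT + ψ * lamT * IH),
                βp₂ * lamT * RTH,
                0]) :
    (∃ i : Fin 8, G i < 0) ∧ ¬ (∀ i : Fin 8, 0 ≤ G i) :=
  H2_fails_general Λ μ δ ψ βp₁ βp₂ hδ S IT RT IH RTH hIT lamT lamH hlamHpos G hG
end
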